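/- Let L be a complete lattice, X a set of elements of L not containing ⊤, and suppose L is X-top. The following are equivalent: (1) the set C(L) of radical elements satisfies the ascending chain condition; (2) every subset of (X, τ^cl) is compact; (3) every open set of (X, τ^cl) is compact. -/
import Mathlib

namespace ZariskiLattice

variable {L : Type*} [CompleteLattice L]

/-- The variety of `a` inside `X`: the points of `X` above `a`. -/
def V (X : Set L) (a : L) : Set X := {p : X | a ≤ (p : L)}

/-- The classical Zariski topology on `X`, generated by the subbase
`{X \ V a | a ∈ L}`. -/
def tauCl (X : Set L) : TopologicalSpace X :=
  TopologicalSpace.generateFrom {s : Set X | ∃ a : L, s = (V X a)ᶜ}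

/-- The finer patch topology on `X`, generated by the subbase
`{V a ∩ (X \ V b) | a, b ∈ L}`. -/
def tauFp (X : Set L) : TopologicalSpace X :=
  TopologicalSpace.generateFrom {s : Set X | ∃ a b : L, s = V X a ∩ (V X b)ᶜ}

/-- `I(A) = ⨅_{p ∈ A} p` for a subset `A ⊆ X`. -/
def lanI (X : Set L) (A : Set X) : L := ⨅ p ∈ A, (p : L)

/-- The radical `√a = I(V(a))` of an element `a`. -/
def rad (X : Set L) (a : L) : L := lanI X (V X a)

/-- The set of radical elements `C(L) = {a | √a = a}`. -/
def CL (X : Set L) : Set L := {a : L | rad X a = a}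

/-- `L` is `X`-top: the varieties are closed under finite unions. -/
def IsXTop (X : Set L) : Prop := ∀ a b : L, ∃ c : L, V X a ∪ V X b = V X c

/-- The set of maximal elements of `C(L) \ {⊤}`. -/
def MaxC (X : Set L) : Set L :=
  {q : L | q ∈ CL X ∧ q ≠ ⊤ ∧ ∀ r ∈ CL X, r ≠ ⊤ → q ≤ r → r = q}

/-- `C(L)` satisfies the complete max property. -/
def CompleteMax (X : Set L) : Prop :=
  ∀ q ∈ MaxC X, ¬ (⨅ p ∈ MaxC X \ {q}, p) ≤ q

lemma V_top_empty {X : Set L} (hX : (⊤ : L) ∉ X) : V X (⊤ : L) = ∅ := by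
  ext p
  simp only [V, Set.mem_setOf_eq, Set.mem_empty_iff_false, iff_false, top_le_iff]
  intro h
  exact hX (h ▸ p.2)

lemma V_iSup {X : Set L} {ι : Sort*} (g : ι → L) :
    V X (⨆ i, g i) = ⋂ i, V X (g i) := by
  ext p
  simp [V, iSup_le_iff]

lemma le_rad {X : Set L} (a : L) : a ≤ rad X a := by
  simp only [rad, lanI, le_iInf_iff]
  exact fun p hp => hp

lemma V_rad {X : Set L} (a : L) : V X (rad X a) = V X a := by
  apply Set.Subset.antisymm
  · intro p hp
    exact le_trans (le_rad a) hp
  · intro p hp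
    exact iInf₂_le p hp

lemma rad_mem_CL {X : Set L} (a : L) : rad X a ∈ CL X := by
  show rad X (rad X a) = rad X a
  conv_lhs => rw [rad]
  rw [V_rad]
  rfl

lemma rad_le_of_V_subset {X : Set L} {a b : L} (h : V X b ⊆ V X a) :
    rad X a ≤ rad X b := by
  simp only [rad, lanI, le_iInf_iff]
  intro p hp
  exact iInf₂_le p (h hp)

/-- Characterization of the open sets of `tauCl`. -/
lemma isOpen_tauCl_iff {X : Set L} (hX : (⊤ : L) ∉ X) (hTop : IsXTop X) (s : Set X) :
    @IsOpen ↥X (tauCl X) s ↔ ∃ a : L, s = (V X a)ᶜ := by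
  constructor
  · intro h
    induction h with
    | basic u hu => exact hu
    | univ =>
        exact ⟨⊤, by rw [V_top_empty hX, Set.compl_empty]⟩
    | inter u v _ _ ihu ihv =>
        obtain ⟨a, rfl⟩ := ihu
        obtain ⟨b, rfl⟩ := ihv
        obtain ⟨c, hc⟩ := hTop a b
        exact ⟨c, by rw [← Set.compl_union, hc]⟩
    | sUnion S _ ih =>
        choose g hg using ih
        refine ⟨⨆ u : {u // u ∈ S}, g u u.2, ?_⟩
        rw [V_iSup, Set.compl_iInter]
        ext p
        simp only [Set.mem_sUnion, Set.mem_iUnion]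
        constructor
        · rintro ⟨u, hu, hp⟩
          exact ⟨⟨u, hu⟩, by rw [← hg u hu]; exact hp⟩
        · rintro ⟨⟨u, hu⟩, hp⟩
          exact ⟨u, hu, by rw [hg u hu]; exact hp⟩
  · rintro ⟨a, rfl⟩
    exact TopologicalSpace.GenerateOpen.basic _ ⟨a, rfl⟩

lemma isClosed_tauCl_iff {X : Set L} (hX : (⊤ : L) ∉ X) (hTop : IsXTop X) (s : Set X) :
    @IsClosed ↥X (tauCl X) s ↔ ∃ a : L, s = V X a := by
  letI := tauCl X
  rw [← isOpen_compl_iff, isOpen_tauCl_iff hX hTop]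
  constructor
  · rintro ⟨a, h⟩
    exact ⟨a, by rw [← compl_compl s, h, compl_compl]⟩
  · rintro ⟨a, rfl⟩
    exact ⟨a, rfl⟩

/-- `tauCl` is noetherian iff there is no strictly increasing sequence of radicals. -/
lemma noetherian_iff_acc {X : Set L} (hX : (⊤ : L) ∉ X) (hTop : IsXTop X) :
    (¬ ∃ f : ℕ → L, (∀ n, f n ∈ CL X) ∧ StrictMono f) ↔
      @TopologicalSpace.NoetherianSpace ↥X (tauCl X) := by
  letI := tauCl X
  rw [((TopologicalSpace.noetherianSpace_TFAE ↥X).out 0 1 :)]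
  show _ ↔ IsWellFounded (TopologicalSpace.Closeds ↥X) (· < ·)
  rw [isWellFounded_iff, RelEmbedding.wellFounded_iff_isEmpty]
  constructor
  · intro h
    by_contra hne
    rw [not_isEmpty_iff] at hne
    obtain ⟨e⟩ := hne
    -- e : (· > ·) on ℕ ↪r (· < ·) on Closeds X ; so e is strictly antitone
    have hanti : ∀ {n m : ℕ}, n < m → (e m : TopologicalSpace.Closeds X) < e n := by
      intro n m hnm
      exact e.map_rel_iff.2 hnm
    -- each closed set is a variety
    have hvar : ∀ n : ℕ, ∃ a : L, ((e n : TopologicalSpace.Closeds X) : Set X) = V X a :=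
      fun n => (isClosed_tauCl_iff hX hTop _).1 (e n).2
    choose g hg using hvar
    refine h ⟨fun n => rad X (g n), fun n => rad_mem_CL _, ?_⟩
    intro n m hnm
    have hsub : ((e m : TopologicalSpace.Closeds X) : Set X) ⊆
        ((e n : TopologicalSpace.Closeds X) : Set X) := (hanti hnm).le
    have hne' : ((e m : TopologicalSpace.Closeds X) : Set X) ≠
        ((e n : TopologicalSpace.Closeds X) : Set X) := by
      intro hcontra
      exact (hanti hnm).ne (SetLike.coe_injective hcontra)
    rw [hg n, hg m] at hsub hne'
    refine lt_of_le_of_ne (rad_le_of_V_subset hsub) ?_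
    intro heq
    dsimp only at heq
    apply hne'
    rw [← V_rad (g m), ← V_rad (g n), heq]
  · rintro h ⟨f, hf, hmono⟩
    -- build a strictly decreasing sequence of closed sets
    have hcl : ∀ n, @IsClosed ↥X (tauCl X) (V X (f n)) := fun n =>
      (isClosed_tauCl_iff hX hTop _).2 ⟨f n, rfl⟩
    have hdec : ∀ n : ℕ, (⟨V X (f (n + 1)), hcl (n + 1)⟩ : TopologicalSpace.Closeds X) <
        (⟨V X (f n), hcl n⟩ : TopologicalSpace.Closeds X) := by
      intro n
      have hle : V X (f (n + 1)) ⊆ V X (f n) :=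
        fun p hp => le_trans (hmono (Nat.lt_succ_self n)).le hp
      refine lt_of_le_of_ne (by exact_mod_cast hle) ?_
      intro hcontra
      have : V X (f (n + 1)) = V X (f n) := congrArg SetLike.coe hcontra
      have : rad X (f (n + 1)) = rad X (f n) := by unfold rad; rw [this]
      rw [hf (n + 1), hf n] at this
      exact (hmono (Nat.lt_succ_self n)).ne' this
    exact h.false (RelEmbedding.natGT (fun n => (⟨V X (f n), hcl n⟩ : TopologicalSpace.Closeds ↥X)) hdec)

/-- If `L` is `X`-top, then the following are equivalent:
(1) `C(L)` satisfies the ACC; (2) every subset of `(X, τ^cl)` is compact;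
(3) every open subset of `(X, τ^cl)` is compact. -/
theorem acc_iff_all_compact (X : Set L) (hX : (⊤ : L) ∉ X) (hTop : IsXTop X) :
    ((¬ ∃ f : ℕ → L, (∀ n, f n ∈ CL X) ∧ StrictMono f) ↔
      ∀ s : Set X, @IsCompact ↥X (tauCl X) s) ∧
    ((∀ s : Set X, @IsCompact ↥X (tauCl X) s) ↔
      (∀ s : Set X, @IsOpen ↥X (tauCl X) s → @IsCompact ↥X (tauCl X) s)) := by
  letI := tauCl X
  constructor
  · rw [noetherian_iff_acc hX hTop]
    exact (TopologicalSpace.noetherianSpace_TFAE ↥X).out 0 2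
  · constructor
    · exact fun h s _ => h s
    · intro h
      have h4 : ∀ s : TopologicalSpace.Opens ↥X, IsCompact (s : Set ↥X) :=
        fun s => h s s.2
      exact ((TopologicalSpace.noetherianSpace_TFAE ↥X).out 3 2).1 h4

end ZariskiLattice
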